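/- Let J be a tree, let M be a J-strip system in a graph G, and let ab be a cross-edge for M with partition (α,β). If X ⊆ V(M)∪{a,b} is not local and {a,b} is not a subset of X, then there exist x,y ∈ X such that {x,y} is not local. -/

import Mathlib

open SimpleGraph

namespace EHF

variable {V : Type*} {W : Type*} {U : Type*}

/-- The closed neighbourhood `N[a]` of a vertex `a`. -/
def closedNbhd (G : SimpleGraph V) (a : V) : Set V := insert a (G.neighborSet a)

/-- A hole: an induced cycle of length at least four. -/
def IsHole (G : SimpleGraph V) {v : V} (c : G.Walk v v) : Prop :=
  c.IsCycle ∧ 4 ≤ c.length ∧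
    ∀ x y : V, x ∈ c.support → y ∈ c.support → G.Adj x y → s(x, y) ∈ c.edges

/-- A graph is even-hole-free if it has no hole with an even number of vertices. -/
def EvenHoleFree (G : SimpleGraph V) : Prop :=
  ∀ (v : V) (c : G.Walk v v), IsHole G c → ¬ Even c.length

/-- A vertex is bisimplicial if its neighbourhood is the union of two cliques. -/
def Bisimplicial (G : SimpleGraph V) (v : V) : Prop :=
  ∃ K₁ K₂ : Set V, G.IsClique K₁ ∧ G.IsClique K₂ ∧ G.neighborSet v = K₁ ∪ K₂

/-- `F` induces a connected subgraph of `G`. -/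
def ConnectedSubset (G : SimpleGraph V) (F : Set V) : Prop :=
  F.Nonempty ∧ ∀ x ∈ F, ∀ y ∈ F, ∃ p : G.Walk x y, ∀ z ∈ p.support, z ∈ F

/-- `F` is the vertex set of a connected component of `G` minus the vertex set `S`. -/
def IsComponentOf (G : SimpleGraph V) (S F : Set V) : Prop :=
  ConnectedSubset G F ∧ Disjoint F S ∧
    ∀ x ∈ F, ∀ y : V, y ∉ S → G.Adj x y → y ∈ F

/-- The set of vertices of `S` having a neighbour in `F`. -/
def Att (G : SimpleGraph V) (S F : Set V) : Set V :=
  {v ∈ S | ∃ x ∈ F, G.Adj v x}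

/-- A cutset: the rest of the graph is the union of two nonempty sets that are
anticomplete to each other. -/
def IsCutset (G : SimpleGraph V) (C : Set V) : Prop :=
  ∃ X Y : Set V, X.Nonempty ∧ Y.Nonempty ∧ Disjoint X Y ∧ X ∪ Y = Cᶜ ∧
    ∀ x ∈ X, ∀ y ∈ Y, ¬ G.Adj x y

/-- `G` has a full star cutset with centre `v`. -/
def FullStarCutset (G : SimpleGraph V) (v : V) : Prop :=
  IsCutset G (closedNbhd G v)

/-- A walk is induced if every edge of `G` between vertices of the walk is an
edge of the walk. -/
def InducedWalk (G : SimpleGraph V) {x y : V} (P : G.Walk x y) : Prop :=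
  ∀ u v : V, u ∈ P.support → v ∈ P.support → G.Adj u v → s(u, v) ∈ P.edges

/-- A theta with ends `u,w` and constituent paths `P₁,P₂,P₃`, as an induced
subgraph of `G`. -/
def IsThetaIn (G : SimpleGraph V) (u w : V) (P₁ P₂ P₃ : G.Walk u w) : Prop :=
  u ≠ w ∧ P₁.IsPath ∧ P₂.IsPath ∧ P₃.IsPath ∧
  2 ≤ P₁.length ∧ 2 ≤ P₂.length ∧ 2 ≤ P₃.length ∧
  (∀ v : V, v ∈ P₁.support → v ∈ P₂.support → v = u ∨ v = w) ∧
  (∀ v : V, v ∈ P₁.support → v ∈ P₃.support → v = u ∨ v = w) ∧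
  (∀ v : V, v ∈ P₂.support → v ∈ P₃.support → v = u ∨ v = w) ∧
  (∀ x y : V, (x ∈ P₁.support ∨ x ∈ P₂.support ∨ x ∈ P₃.support) →
    (y ∈ P₁.support ∨ y ∈ P₂.support ∨ y ∈ P₃.support) → G.Adj x y →
    s(x, y) ∈ P₁.edges ∨ s(x, y) ∈ P₂.edges ∨ s(x, y) ∈ P₃.edges)

/-- A near-prism with bases `{a₁,a₂,a₃}`, `{b₁,b₂,b₃}` and constituent paths
`R₁,R₂,R₃`, as an induced subgraph of `G`. -/
def IsNearPrismIn (G : SimpleGraph V) (a₁ a₂ a₃ b₁ b₂ b₃ : V)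
    (R₁ : G.Walk a₁ b₁) (R₂ : G.Walk a₂ b₂) (R₃ : G.Walk a₃ b₃) : Prop :=
  G.Adj a₁ a₂ ∧ G.Adj a₁ a₃ ∧ G.Adj a₂ a₃ ∧
  G.Adj b₁ b₂ ∧ G.Adj b₁ b₃ ∧ G.Adj b₂ b₃ ∧
  (({a₁, a₂, a₃} : Set V) ∩ ({b₁, b₂, b₃} : Set V) = ({a₃} : Set V) ∩ ({b₃} : Set V)) ∧
  R₁.IsPath ∧ R₂.IsPath ∧ R₃.IsPath ∧
  (∀ v : V, v ∈ R₁.support → v ∉ R₂.support) ∧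
  (∀ v : V, v ∈ R₁.support → v ∉ R₃.support) ∧
  (∀ v : V, v ∈ R₂.support → v ∉ R₃.support) ∧
  (∀ p q : V, (p ∈ R₁.support ∨ p ∈ R₂.support ∨ p ∈ R₃.support) →
    (q ∈ R₁.support ∨ q ∈ R₂.support ∨ q ∈ R₃.support) → G.Adj p q →
    s(p, q) ∈ R₁.edges ∨ s(p, q) ∈ R₂.edges ∨ s(p, q) ∈ R₃.edges ∨
    s(p, q) = s(a₁, a₂) ∨ s(p, q) = s(a₁, a₃) ∨ s(p, q) = s(a₂, a₃) ∨
    s(p, q) = s(b₁, b₂) ∨ s(p, q) = s(b₁, b₃) ∨ s(p, q) = s(b₂, b₃))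

/-- An extended near-prism contained in `G`, with cross-edge `xy` where
`x` lies in the interior of `R₁` and `y` in the interior of `R₂`. -/
def IsExtNearPrismIn (G : SimpleGraph V) (a₁ a₂ a₃ b₁ b₂ b₃ : V)
    (R₁ : G.Walk a₁ b₁) (R₂ : G.Walk a₂ b₂) (R₃ : G.Walk a₃ b₃) (x y : V) : Prop :=
  G.Adj a₁ a₂ ∧ G.Adj a₁ a₃ ∧ G.Adj a₂ a₃ ∧
  G.Adj b₁ b₂ ∧ G.Adj b₁ b₃ ∧ G.Adj b₂ b₃ ∧
  (({a₁, a₂, a₃} : Set V) ∩ ({b₁, b₂, b₃} : Set V) = ({a₃} : Set V) ∩ ({b₃} : Set V)) ∧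
  R₁.IsPath ∧ R₂.IsPath ∧ R₃.IsPath ∧
  (∀ v : V, v ∈ R₁.support → v ∉ R₂.support) ∧
  (∀ v : V, v ∈ R₁.support → v ∉ R₃.support) ∧
  (∀ v : V, v ∈ R₂.support → v ∉ R₃.support) ∧
  x ∈ R₁.support ∧ x ≠ a₁ ∧ x ≠ b₁ ∧
  y ∈ R₂.support ∧ y ≠ a₂ ∧ y ≠ b₂ ∧
  G.Adj x y ∧
  (∀ p q : V, (p ∈ R₁.support ∨ p ∈ R₂.support ∨ p ∈ R₃.support) →
    (q ∈ R₁.support ∨ q ∈ R₂.support ∨ q ∈ R₃.support) → G.Adj p q →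
    s(p, q) ∈ R₁.edges ∨ s(p, q) ∈ R₂.edges ∨ s(p, q) ∈ R₃.edges ∨
    s(p, q) = s(a₁, a₂) ∨ s(p, q) = s(a₁, a₃) ∨ s(p, q) = s(a₂, a₃) ∨
    s(p, q) = s(b₁, b₂) ∨ s(p, q) = s(b₁, b₃) ∨ s(p, q) = s(b₂, b₃) ∨
    s(p, q) = s(x, y))

/-- There is an extended near-prism contained in `G` such that `a` is an end of
its cross-edge. -/
def ExtNearPrismCrossEnd (G : SimpleGraph V) (a : V) : Prop :=
  ∃ (a₁ a₂ a₃ b₁ b₂ b₃ : V) (R₁ : G.Walk a₁ b₁) (R₂ : G.Walk a₂ b₂)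
    (R₃ : G.Walk a₃ b₃) (y : V),
    IsExtNearPrismIn G a₁ a₂ a₃ b₁ b₂ b₃ R₁ R₂ R₃ a y ∨
    IsExtNearPrismIn G a₁ a₂ a₃ b₁ b₂ b₃ R₁ R₂ R₃ y a

/-- `G` contains an even wheel (as an induced subgraph). -/
def HasEvenWheel (G : SimpleGraph V) : Prop :=
  ∃ (u : V) (c : G.Walk u u) (v : V), IsHole G c ∧ v ∉ c.support ∧
    3 ≤ {x : V | x ∈ c.support ∧ G.Adj v x}.ncard ∧
    ({x : V | x ∈ c.support ∧ G.Adj v x}.ncard = 3 →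
      ∀ x y : V, x ∈ c.support → y ∈ c.support → G.Adj v x → G.Adj v y → ¬ G.Adj x y) ∧
    Even {x : V | x ∈ c.support ∧ G.Adj v x}.ncard

/-- A pyramid with apex `a`, base `{b₁,b₂,b₃}` and constituent paths
`R₁,R₂,R₃`, as an induced subgraph of `G`. -/
def IsPyramidIn (G : SimpleGraph V) (a b₁ b₂ b₃ : V)
    (R₁ : G.Walk a b₁) (R₂ : G.Walk a b₂) (R₃ : G.Walk a b₃) : Prop :=
  G.Adj b₁ b₂ ∧ G.Adj b₁ b₃ ∧ G.Adj b₂ b₃ ∧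
  a ≠ b₁ ∧ a ≠ b₂ ∧ a ≠ b₃ ∧
  R₁.IsPath ∧ R₂.IsPath ∧ R₃.IsPath ∧
  (∀ v : V, v ∈ R₁.support → v ∈ R₂.support → v = a) ∧
  (∀ v : V, v ∈ R₁.support → v ∈ R₃.support → v = a) ∧
  (∀ v : V, v ∈ R₂.support → v ∈ R₃.support → v = a) ∧
  ((2 ≤ R₁.length ∧ 2 ≤ R₂.length) ∨ (2 ≤ R₁.length ∧ 2 ≤ R₃.length) ∨
    (2 ≤ R₂.length ∧ 2 ≤ R₃.length)) ∧
  (∀ p q : V, (p ∈ R₁.support ∨ p ∈ R₂.support ∨ p ∈ R₃.support) →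
    (q ∈ R₁.support ∨ q ∈ R₂.support ∨ q ∈ R₃.support) → G.Adj p q →
    s(p, q) ∈ R₁.edges ∨ s(p, q) ∈ R₂.edges ∨ s(p, q) ∈ R₃.edges ∨
    s(p, q) = s(b₁, b₂) ∨ s(p, q) = s(b₁, b₃) ∨ s(p, q) = s(b₂, b₃))

/-- A vertex `a` is splendid: `V(G)\N[a]` is connected, every neighbour of `a`
has a neighbour in `V(G)\N[a]`, and there is no short pyramid with apex `a`. -/
def Splendid (G : SimpleGraph V) (a : V) : Prop :=
  ConnectedSubset G ((closedNbhd G a)ᶜ) ∧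
  (∀ v : V, G.Adj a v → ∃ w : V, w ∉ closedNbhd G a ∧ G.Adj v w) ∧
  ¬ ∃ (b₁ b₂ b₃ : V) (R₁ : G.Walk a b₁) (R₂ : G.Walk a b₂) (R₃ : G.Walk a b₃),
      IsPyramidIn G a b₁ b₂ b₃ R₁ R₂ R₃ ∧
      (R₁.length = 1 ∨ R₂.length = 1 ∨ R₃.length = 1)

/-- A rung of the strip `(A,B,C)`. -/
def IsRung (G : SimpleGraph V) (A B C : Set V) {x y : V} (P : G.Walk x y) : Prop :=
  P.IsPath ∧ x ∈ A ∧ y ∈ B ∧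
  (∀ v ∈ P.support, v ≠ x → v ≠ y → v ∈ C) ∧
  (x ≠ y → x ∉ B ∧ y ∉ A) ∧
  InducedWalk G P

/-- A strip `(A,B,C)`: `A,B` nonempty and disjoint from `C`, and every vertex of
`A∪B∪C` lies on a rung. -/
def IsStrip (G : SimpleGraph V) (A B C : Set V) : Prop :=
  A.Nonempty ∧ B.Nonempty ∧ Disjoint A C ∧ Disjoint B C ∧
  ∀ v ∈ A ∪ B ∪ C, ∃ (x y : V) (P : G.Walk x y), IsRung G A B C P ∧ v ∈ P.support

/-- A `J`-strip system in `G`. -/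
structure StripSystem (G : SimpleGraph V) (J : SimpleGraph W) where
  ME : W → W → Set V
  MV : W → Set V
  me_symm : ∀ u v : W, ME u v = ME v u
  me_disj : ∀ u v w x : W, J.Adj u v → J.Adj w x → s(u, v) ≠ s(w, x) →
    Disjoint (ME u v) (ME w x)
  mv_sub : ∀ u : W, MV u ⊆ ⋃ (v : W), ⋃ (_ : J.Adj u v), ME u v
  strip : ∀ u v : W, J.Adj u v →
    IsStrip G (ME u v ∩ MV u) (ME u v ∩ MV v) (ME u v \ (MV u ∪ MV v))
  far : ∀ u v w x : W, J.Adj u v → J.Adj w x → u ≠ w → u ≠ x → v ≠ w → v ≠ x →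
    ∀ p ∈ ME u v, ∀ q ∈ ME w x, ¬ G.Adj p q
  near : ∀ u v w : W, J.Adj u v → J.Adj u w → v ≠ w →
    ∀ p ∈ ME u v, ∀ q ∈ ME u w, (G.Adj p q ↔ p ∈ MV u ∧ q ∈ MV u)

/-- `V(M)`: the union of the sets `M_e` over the edges of `J`. -/
def VM {G : SimpleGraph V} {J : SimpleGraph W} (S : StripSystem G J) : Set V :=
  ⋃ (u : W), ⋃ (v : W), ⋃ (_ : J.Adj u v), S.ME u v

/-- A leaf of a graph: a vertex of degree exactly one. -/
def IsLeaf (J : SimpleGraph W) (u : W) : Prop := (J.neighborSet u).ncard = 1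

/-- `ab` is a cross-edge for the strip system `S` with partition `(α,β)` of the
leaves of `J`. -/
def IsCrossEdge {G : SimpleGraph V} {J : SimpleGraph W} (S : StripSystem G J)
    (a b : V) (α β : Set W) : Prop :=
  G.Adj a b ∧
  α ∪ β = {u : W | IsLeaf J u} ∧ Disjoint α β ∧
  (∀ u : W, (J.neighborSet u).ncard ≠ 2) ∧
  3 ≤ Nat.card W ∧
  (∀ u u₁ u₂ : W, u₁ ∈ α → u₂ ∈ α → J.Adj u u₁ → J.Adj u u₂ → u₁ = u₂) ∧
  (∀ u u₁ u₂ : W, u₁ ∈ β → u₂ ∈ β → J.Adj u u₁ → J.Adj u u₂ → u₁ = u₂) ∧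
  (∀ u v : W, J.Adj u v → a ∉ S.ME u v ∧ b ∉ S.ME u v) ∧
  (∀ x ∈ VM S, (G.Adj a x ↔ ∃ u ∈ α, x ∈ S.MV u)) ∧
  (∀ x ∈ VM S, (G.Adj b x ↔ ∃ u ∈ β, x ∈ S.MV u))

/-- A local subset of `V(M)∪{a,b}`. -/
def IsLocal {G : SimpleGraph V} {J : SimpleGraph W} (S : StripSystem G J)
    (a b : V) (α β : Set W) (X : Set V) : Prop :=
  (∃ u v : W, J.Adj u v ∧ X ⊆ S.ME u v) ∨
  (∃ u : W, X ⊆ S.MV u) ∨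
  (a ∈ X ∧ b ∉ X ∧ ∃ u ∈ α, X \ {a} ⊆ S.MV u) ∨
  (b ∈ X ∧ a ∉ X ∧ ∃ u ∈ β, X \ {b} ⊆ S.MV u)

/-- A branch-vertex of a tree: a vertex of degree different from two. -/
def BranchVertex (T : SimpleGraph U) (u : U) : Prop := (T.neighborSet u).ncard ≠ 2

/-- `u` and `v` are distinct branch-vertices joined by a branch of `T`. -/
def JoinedByBranch (T : SimpleGraph U) (u v : U) : Prop :=
  u ≠ v ∧ BranchVertex T u ∧ BranchVertex T v ∧
    ∃ p : T.Walk u v, p.IsPath ∧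
      ∀ w ∈ p.support, w ≠ u → w ≠ v → (T.neighborSet w).ncard = 2

/-- The shape of a tree `T`: the graph on its branch-vertices, two being
adjacent when joined by a branch. -/
def Shape (T : SimpleGraph U) : SimpleGraph {u : U // BranchVertex T u} :=
  SimpleGraph.fromRel (fun u v => JoinedByBranch T u.1 v.1)

/-- `y` is reachable from `x` in `T` by a walk avoiding `v`. -/
def ReachAvoiding (T : SimpleGraph U) (v x y : U) : Prop :=
  ∃ p : T.Walk x y, v ∉ p.support

/-- The component of `x` in `T` minus `v` contains no vertex of `A`. -/
def MissesSet (T : SimpleGraph U) (v : U) (A : Set U) (x : U) : Prop :=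
  ∀ z : U, ReachAvoiding T v x z → z ∉ A

/-- `G` contains an induced extended tree line-graph `H(T)` with cross-edge
`ab`, via the injection `φ` of the edges of `T` into `V(G)`, where `(A',B')`
is the bipartition of the tree `T`. -/
def ExtTreeLineGraphIn (G : SimpleGraph V) (T : SimpleGraph U)
    (A' B' : Set U) (a b : V) (φ : Sym2 U → V) : Prop :=
  T.IsTree ∧
  A' ∪ B' = Set.univ ∧ Disjoint A' B' ∧
  (∀ u v : U, T.Adj u v → (u ∈ A' ↔ v ∈ B')) ∧
  3 ≤ {u : U | IsLeaf T u}.ncard ∧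
  (∀ v x y : U, x ≠ v → y ≠ v → MissesSet T v A' x → MissesSet T v A' y →
    ReachAvoiding T v x y) ∧
  (∀ v x y : U, x ≠ v → y ≠ v → MissesSet T v B' x → MissesSet T v B' y →
    ReachAvoiding T v x y) ∧
  G.Adj a b ∧
  Set.InjOn φ T.edgeSet ∧
  (∀ e ∈ T.edgeSet, φ e ≠ a ∧ φ e ≠ b) ∧
  (∀ e ∈ T.edgeSet, ∀ f ∈ T.edgeSet, e ≠ f →
    (G.Adj (φ e) (φ f) ↔ ∃ u : U, u ∈ e ∧ u ∈ f)) ∧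
  (∀ e ∈ T.edgeSet, (G.Adj a (φ e) ↔ ∃ u : U, u ∈ e ∧ IsLeaf T u ∧ u ∈ A')) ∧
  (∀ e ∈ T.edgeSet, (G.Adj b (φ e) ↔ ∃ u : U, u ∈ e ∧ IsLeaf T u ∧ u ∈ B'))

/-- `(J, M)` is optimal for the edge `ab`: `G` contains an induced extended tree
line-graph with cross-edge `ab`; among all such, the shape `J` has as many edges
as possible; and the `J`-strip system `S` has cross-edge `ab` with partition
`(α,β)` and `V(M)` maximal. -/
def OptimalFor {G : SimpleGraph V} {J : SimpleGraph W} (S : StripSystem G J)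
    (a b : V) (α β : Set W) : Prop :=
  (∃ (n : ℕ) (T : SimpleGraph (Fin n)) (A' B' : Set (Fin n)) (φ : Sym2 (Fin n) → V),
      ExtTreeLineGraphIn G T A' B' a b φ ∧ Nonempty (J ≃g Shape T)) ∧
  (∀ (n : ℕ) (T : SimpleGraph (Fin n)) (A' B' : Set (Fin n)) (φ : Sym2 (Fin n) → V),
      ExtTreeLineGraphIn G T A' B' a b φ →
      (Shape T).edgeSet.ncard ≤ J.edgeSet.ncard) ∧
  IsCrossEdge S a b α β ∧
  (∀ (S' : StripSystem G J) (α' β' : Set W), IsCrossEdge S' a b α' β' →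
      VM S ⊆ VM S' → VM S' = VM S)

/-- There is a path from `y` to `VMset \ N[a]` containing no neighbours of `a`
except `y`. -/
def ExternalFrom (G : SimpleGraph V) (VMset : Set V) (a y : V) : Prop :=
  ∃ (z : V) (P : G.Walk y z), P.IsPath ∧ z ∈ VMset ∧ z ∉ closedNbhd G a ∧
    ∀ v ∈ P.support, G.Adj a v → v = y

/-- A major vertex: a common neighbour of `a,b` that is both `a`-external and
`b`-external. -/
def MajorVertex {G : SimpleGraph V} {J : SimpleGraph W} (S : StripSystem G J)
    (a b : V) (y : V) : Prop :=
  G.Adj a y ∧ G.Adj b y ∧ ExternalFrom G (VM S) a y ∧ ExternalFrom G (VM S) b y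

/-- The vertex set of a pyramid strip system. -/
def PSSVerts (a : V) {k : ℕ} (A B C : Fin k → Set V) : Set V :=
  insert a (⋃ i, A i ∪ B i ∪ C i)

/-- A pyramid strip system with apex `a` and proper strips `(A i, B i, C i)`. -/
def IsPyramidStripSystem (G : SimpleGraph V) (a : V) {k : ℕ}
    (A B C : Fin k → Set V) : Prop :=
  3 ≤ k ∧
  (∀ i, IsStrip G (A i) (B i) (C i)) ∧
  (∀ i, Disjoint (A i) (B i)) ∧
  (∀ i j, i ≠ j → Disjoint (A i ∪ B i ∪ C i) (A j ∪ B j ∪ C j)) ∧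
  (∀ i j, i ≠ j → ∀ p ∈ A i ∪ B i ∪ C i, ∀ q ∈ A j ∪ B j ∪ C j,
      (G.Adj p q ↔ p ∈ B i ∧ q ∈ B j)) ∧
  (∀ i, a ∉ A i ∪ B i ∪ C i) ∧
  (∀ i, ∀ p ∈ A i ∪ B i ∪ C i, (G.Adj a p ↔ p ∈ A i))

/-- `D i`: the union of the vertex sets of all components `F` of
`G \ (V(𝒮) ∪ N[a])` having a neighbour in `A i ∪ C i`. -/
def PSSD (G : SimpleGraph V) (a : V) {k : ℕ} (A B C : Fin k → Set V)
    (i : Fin k) : Set V :=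
  ⋃₀ {F : Set V | IsComponentOf G (PSSVerts a A B C ∪ closedNbhd G a) F ∧
      ∃ v ∈ A i ∪ C i, ∃ x ∈ F, G.Adj v x}

def TypeAlpha (G : SimpleGraph V) {k : ℕ} (A B C : Fin k → Set V) (v : V) : Prop :=
  ∀ i : Fin k, (∃ p ∈ B i ∪ C i, G.Adj v p) ∨ ∀ p ∈ A i, G.Adj v p

def TypeAlpha' (G : SimpleGraph V) (a : V) {k : ℕ} (A B C : Fin k → Set V)
    (v : V) : Prop :=
  ∃ i : Fin k, (∃ x ∈ PSSD G a A B C i, G.Adj v x) ∧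
    (∀ p ∈ B i ∪ C i, ¬ G.Adj v p) ∧
    ∀ j : Fin k, j ≠ i →
      (∀ p ∈ A j, G.Adj v p) ∧ ∀ p ∈ B j ∪ C j ∪ PSSD G a A B C j, ¬ G.Adj v p

def TypeBeta (G : SimpleGraph V) {k : ℕ} (A B C : Fin k → Set V) (v : V) : Prop :=
  ∃ i : Fin k, (∀ p ∈ A i ∪ B i ∪ C i, ¬ G.Adj v p) ∧
    ∀ j : Fin k, j ≠ i → ∃ p ∈ B j ∪ C j, G.Adj v p

def TypeGamma (G : SimpleGraph V) (a : V) {k : ℕ} (A B C : Fin k → Set V)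
    (v : V) : Prop :=
  ∃ (i : Fin k) (q : V) (Q : G.Walk v q), Q.IsPath ∧ InducedWalk G Q ∧
    (∀ w ∈ Q.support, w ≠ v → w ∉ PSSVerts a A B C ∪ closedNbhd G a) ∧
    (∃ p ∈ ⋃ j, B j, G.Adj q p) ∧
    ((∀ p ∈ (⋃ j, B j) \ B i, G.Adj q p) ∨ ∀ p ∈ (⋃ j, B j) \ B i, ¬ G.Adj q p) ∧
    (∀ j : Fin k, j ≠ i → ∀ p ∈ A j, G.Adj v p) ∧
    (∀ j : Fin k, ∀ p ∈ B j ∪ C j ∪ PSSD G a A B C j, ¬ G.Adj v p) ∧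
    ∀ w ∈ Q.support, w ≠ v → ∀ p ∈ PSSVerts a A B C, G.Adj w p →
      w = q ∧ p ∈ ⋃ j, B j

/-- A backdoor for `z`, relative to the strip `(A,B,C)` and the set `D`. -/
def Backdoor (G : SimpleGraph V) (A B C D : Set V) (z : V) : Prop :=
  ∃ (b' : V) (R : G.Walk z b'), R.IsPath ∧ InducedWalk G R ∧
    (∀ w ∈ R.support, w ≠ z → w ≠ b' → ∀ p ∈ (A ∪ B ∪ C) ∪ D, ¬ G.Adj w p) ∧
    (∀ p ∈ B, G.Adj b' p) ∧ ∀ p ∈ A ∪ C ∪ D, ¬ G.Adj b' p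

/-!
Since `{a, b} ⊄ X`, by the symmetry `a ↔ b` we may assume `b ∉ X`.

If `a ∉ X`, then `X ⊆ V(M)` and any two vertices of `X` lie in a common `M_e` or a common `M_t`.
Either all of `X` lies in one `M_e`, or some `x ∈ M_{tv}` and `y ∈ M_{tu}` with `v ≠ u` are
paired through `M_t`; then every other `z ∈ X`, paired with both, lies in `M_t`, since otherwise
the edge pieces would meet or `t, v, u` would span a triangle of the tree `J`.

If `a ∈ X`, then, as `a` lies in no `M_e`, locality of `{a, x}` puts every other `x ∈ X` into some
`M_u` with `u ∈ α`, and all these leaves coincide: two leaves of a tree with at least three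
vertices are not adjacent, and no vertex of `J` has two neighbours in `α`.
-/

lemma IsLeaf.neighborSet_eq {J : SimpleGraph W} {u v : W} (hu : IsLeaf J u) (huv : J.Adj u v) :
    J.neighborSet u = {v} := by
  obtain ⟨w, hw⟩ := Set.ncard_eq_one.mp hu
  have hv : v ∈ J.neighborSet u := huv
  rw [hw, Set.mem_singleton_iff] at hv
  rw [hw, hv]

lemma IsTree.not_adj_of_isLeaf {J : SimpleGraph W} (hJ : J.IsTree) (hcard : 3 ≤ Nat.card W)
    {u v : W} (hu : IsLeaf J u) (hv : IsLeaf J v) : ¬ J.Adj u v := by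
  intro huv
  have hclosed : ∀ x ∈ ({u, v} : Set W), ∀ y, J.Adj x y → y ∈ ({u, v} : Set W) := by
    rintro x (rfl | rfl) y hxy
    · have hy : y ∈ J.neighborSet x := hxy
      simp_all [hu.neighborSet_eq huv]
    · have hy : y ∈ J.neighborSet x := hxy
      simp_all [hv.neighborSet_eq huv.symm]
  obtain ⟨w, hw⟩ : ∃ w, w ∉ ({u, v} : Set W) := by
    by_contra! h
    have := Set.ncard_le_ncard (fun w _ => h w : Set.univ ⊆ ({u, v} : Set W))
    rw [Set.ncard_univ, Set.ncard_pair huv.ne] at this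
    omega
  obtain ⟨p⟩ := hJ.connected.preconnected u w
  obtain ⟨d, -, hd, hd'⟩ := p.exists_boundary_dart _ (by simp) hw
  exact hd' (hclosed _ hd _ d.adj)

lemma IsCrossEdge.symm {G : SimpleGraph V} {J : SimpleGraph W} {S : StripSystem G J} {a b : V}
    {α β : Set W} (h : IsCrossEdge S a b α β) : IsCrossEdge S b a β α := by
  obtain ⟨hab, hleaves, hdisj, hdeg, hcard, hα, hβ, hME, haM, hbM⟩ := h
  exact ⟨hab.symm, Set.union_comm α β ▸ hleaves, hdisj.symm, hdeg, hcard, hβ, hα,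
    fun u v huv => (hME u v huv).symm, hbM, haM⟩

lemma isLocal_swap {G : SimpleGraph V} {J : SimpleGraph W} {S : StripSystem G J} {a b : V}
    {α β : Set W} {X : Set V} : IsLocal S a b α β X ↔ IsLocal S b a β α X := by
  exact or_congr_right (or_congr_right or_comm)

namespace StripSystem

variable {G : SimpleGraph V} {J : SimpleGraph W} (S : StripSystem G J)
  {x y z : V} {t u v p q : W}

lemma sym2_eq_of_mem_ME (huv : J.Adj u v) (hpq : J.Adj p q) (hx : x ∈ S.ME u v)
    (hx' : x ∈ S.ME p q) : s(u, v) = s(p, q) := by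
  by_contra h
  exact Set.disjoint_left.mp (S.me_disj u v p q huv hpq h) hx hx'

lemma ME_eq_of_mem (huv : J.Adj u v) (hpq : J.Adj p q) (hx : x ∈ S.ME u v)
    (hx' : x ∈ S.ME p q) : S.ME p q = S.ME u v := by
  rcases Sym2.eq_iff.mp (S.sym2_eq_of_mem_ME huv hpq hx hx') with ⟨rfl, rfl⟩ | ⟨rfl, rfl⟩
  · rfl
  · exact S.me_symm _ _

lemma exists_adj_mem_ME_of_mem_MV (hx : x ∈ S.MV t) : ∃ w, J.Adj t w ∧ x ∈ S.ME t w := by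
  simpa only [Set.mem_iUnion, exists_prop] using S.mv_sub t hx

lemma eq_or_eq_of_mem_MV_of_mem_ME (hx : x ∈ S.MV t) (huv : J.Adj u v) (hx' : x ∈ S.ME u v) :
    t = u ∨ t = v := by
  obtain ⟨w, htw, hxw⟩ := S.exists_adj_mem_ME_of_mem_MV hx
  rcases Sym2.eq_iff.mp (S.sym2_eq_of_mem_ME htw huv hxw hx') with ⟨h, -⟩ | ⟨h, -⟩
  exacts [Or.inl h, Or.inr h]

lemma adj_of_mem_MV_of_mem_MV (hx : x ∈ S.MV t) (hx' : x ∈ S.MV u) (htu : t ≠ u) :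
    J.Adj t u := by
  obtain ⟨w, htw, hxw⟩ := S.exists_adj_mem_ME_of_mem_MV hx
  rcases S.eq_or_eq_of_mem_MV_of_mem_ME hx' htw hxw with rfl | rfl
  exacts [absurd rfl htu, htw]

def IsMLocal (X : Set V) : Prop :=
  (∃ u v, J.Adj u v ∧ X ⊆ S.ME u v) ∨ ∃ u, X ⊆ S.MV u

lemma mem_ME_or_mem_MV_of_isMLocal_pair (h : S.IsMLocal {z, x}) (huv : J.Adj u v)
    (hx : x ∈ S.ME u v) : z ∈ S.ME u v ∨ z ∈ S.MV u ∨ z ∈ S.MV v := by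
  rcases h with ⟨p, q, hpq, hsub⟩ | ⟨t, hsub⟩ <;> rw [Set.pair_subset_iff] at hsub
  · exact Or.inl (S.ME_eq_of_mem huv hpq hx hsub.2 ▸ hsub.1)
  · rcases S.eq_or_eq_of_mem_MV_of_mem_ME hsub.2 huv hx with rfl | rfl
    exacts [Or.inr (Or.inl hsub.1), Or.inr (Or.inr hsub.1)]

lemma mem_MV_of_fork (hJ : J.IsAcyclic) (hv : J.Adj t v) (hu : J.Adj t u) (hvu : v ≠ u)
    (hzv : z ∈ S.ME t v ∨ z ∈ S.MV t ∨ z ∈ S.MV v)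
    (hzu : z ∈ S.ME t u ∨ z ∈ S.MV t ∨ z ∈ S.MV u) : z ∈ S.MV t := by
  rcases hzv with hzv | hzt | hzv
  · rcases hzu with hzu | hzt | hzu
    · exact absurd (Sym2.congr_right.mp (S.sym2_eq_of_mem_ME hv hu hzv hzu)) hvu
    · exact hzt
    · rcases S.eq_or_eq_of_mem_MV_of_mem_ME hzu hv hzv with h | h
      exacts [absurd h hu.ne', absurd h hvu.symm]
  · exact hzt
  · rcases hzu with hzu | hzt | hzu
    · rcases S.eq_or_eq_of_mem_MV_of_mem_ME hzv hu hzu with h | h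
      exacts [absurd h hv.ne', absurd h hvu]
    · exact hzt
    · classical
      have hvu' := S.adj_of_mem_MV_of_mem_MV hzv hzu hvu
      exact absurd (is3Clique_triple_iff.mpr ⟨hv, hu, hvu'⟩) (hJ.cliqueFree le_rfl _)

lemma isMLocal_of_pairwise (hJ : J.IsTree) {X : Set V} (hX : X ⊆ VM S)
    (hpairs : ∀ x ∈ X, ∀ y ∈ X, S.IsMLocal {x, y}) : S.IsMLocal X := by
  rcases X.eq_empty_or_nonempty with rfl | ⟨x, hx⟩
  · exact Or.inr ⟨hJ.connected.nonempty.some, Set.empty_subset _⟩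
  obtain ⟨u, v, huv, hxuv⟩ : ∃ u v, J.Adj u v ∧ x ∈ S.ME u v := by
    simpa only [VM, Set.mem_iUnion, exists_prop] using hX hx
  by_cases hXuv : X ⊆ S.ME u v
  · exact Or.inl ⟨u, v, huv, hXuv⟩
  obtain ⟨y, hy, hyuv⟩ := Set.not_subset.mp hXuv
  rcases hpairs x hx y hy with ⟨p, q, hpq, hsub⟩ | ⟨t, hsub⟩ <;> rw [Set.pair_subset_iff] at hsub
  · exact absurd (S.ME_eq_of_mem huv hpq hxuv hsub.1 ▸ hsub.2) hyuv
  obtain ⟨v', htv', hxv'⟩ := S.exists_adj_mem_ME_of_mem_MV hsub.1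
  obtain ⟨u', htu', hyu'⟩ := S.exists_adj_mem_ME_of_mem_MV hsub.2
  have hv'u' : v' ≠ u' := by
    rintro rfl
    exact hyuv (S.ME_eq_of_mem htv' huv hxv' hxuv ▸ hyu')
  exact Or.inr ⟨t, fun z hz => S.mem_MV_of_fork hJ.isAcyclic htv' htu' hv'u'
    (S.mem_ME_or_mem_MV_of_isMLocal_pair (hpairs z hz x hx) htv' hxv')
    (S.mem_ME_or_mem_MV_of_isMLocal_pair (hpairs z hz y hy) htu' hyu')⟩

lemma mem_MV_of_isMLocal_of_isLeaf (hJ : J.IsTree) (hcard : 3 ≤ Nat.card W)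
    (hu : IsLeaf J u) (hv : IsLeaf J v) (huniq : ∀ w, J.Adj w u → J.Adj w v → u = v)
    (hx : x ∈ S.MV u) (hy : y ∈ S.MV v) (hyx : S.IsMLocal {y, x}) : y ∈ S.MV u := by
  obtain ⟨w, huw, hxw⟩ := S.exists_adj_mem_ME_of_mem_MV hx
  have hvw : v ≠ w := by
    rintro rfl
    exact IsTree.not_adj_of_isLeaf hJ hcard hu hv huw
  rcases S.mem_ME_or_mem_MV_of_isMLocal_pair hyx huw hxw with hyw | hyu | hyw
  · rcases S.eq_or_eq_of_mem_MV_of_mem_ME hy huw hyw with rfl | h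
    exacts [hy, absurd h hvw]
  · exact hyu
  · obtain rfl := huniq w huw.symm (S.adj_of_mem_MV_of_mem_MV hy hyw hvw).symm
    exact hy

variable {S} {a b : V} {α β : Set W} {X : Set V}

lemma IsMLocal.isLocal (h : S.IsMLocal X) : IsLocal S a b α β X :=
  h.imp_right Or.inl

lemma isMLocal_of_isLocal (ha : a ∉ X) (hb : b ∉ X) (h : IsLocal S a b α β X) :
    S.IsMLocal X := by
  rcases h with h | h | h | h
  exacts [Or.inl h, Or.inr h, absurd h.1 ha, absurd h.1 hb]

end StripSystem

section CrossEdge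

variable {G : SimpleGraph V} {J : SimpleGraph W} {S : StripSystem G J} {a b : V}
  {α β : Set W} {X : Set V}

lemma IsCrossEdge.exists_sdiff_subset_MV_of_isLocal (hcross : IsCrossEdge S a b α β)
    (ha : a ∈ X) (hb : b ∉ X) (h : IsLocal S a b α β X) : ∃ u ∈ α, X \ {a} ⊆ S.MV u := by
  have haME : ∀ u v, J.Adj u v → a ∉ S.ME u v := fun u v huv =>
    (hcross.2.2.2.2.2.2.2.1 u v huv).1
  rcases h with ⟨u, v, huv, hsub⟩ | ⟨u, hsub⟩ | ⟨-, -, h⟩ | ⟨h, -⟩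
  · exact absurd (hsub ha) (haME u v huv)
  · obtain ⟨w, huw, haw⟩ := S.exists_adj_mem_ME_of_mem_MV (hsub ha)
    exact absurd haw (haME u w huw)
  · exact h
  · exact absurd h hb

lemma IsCrossEdge.exists_sdiff_subset_MV (hJ : J.IsTree) (hcross : IsCrossEdge S a b α β)
    (haX : a ∈ X) (hbX : b ∉ X) (hpairs : ∀ x ∈ X, ∀ y ∈ X, IsLocal S a b α β {x, y}) :
    ∃ u ∈ α, X \ {a} ⊆ S.MV u := by
  have hpair : ∀ x ∈ X, ∃ u ∈ α, ({a, x} : Set V) \ {a} ⊆ S.MV u := fun x hx =>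
    hcross.exists_sdiff_subset_MV_of_isLocal (by simp)
      (by simp [hcross.1.ne', (ne_of_mem_of_not_mem hx hbX).symm]) (hpairs a haX x hx)
  obtain ⟨-, hleaves, -, -, hcard, hα, -⟩ := hcross
  have isLeaf : ∀ w ∈ α, IsLeaf J w := fun w hw =>
    (hleaves ▸ Set.mem_union_left β hw : w ∈ {u | IsLeaf J u})
  rcases (X \ {a}).eq_empty_or_nonempty with hempty | ⟨x, hx, hxa⟩
  · obtain ⟨u, hu, -⟩ := hpair a haX
    exact ⟨u, hu, hempty ▸ Set.empty_subset _⟩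
  obtain ⟨u, hu, hxu⟩ := hpair x hx
  refine ⟨u, hu, fun y ⟨hy, hya⟩ => ?_⟩
  obtain ⟨v, hv, hyv⟩ := hpair y hy
  have hyx : S.IsMLocal {y, x} := StripSystem.isMLocal_of_isLocal
    (by rintro (rfl | rfl) <;> contradiction) (by rintro (rfl | rfl) <;> contradiction)
    (hpairs y hy x hx)
  exact S.mem_MV_of_isMLocal_of_isLeaf hJ hcard (isLeaf u hu) (isLeaf v hv)
    (fun w hwu hwv => hα w u v hu hv hwu hwv) (hxu ⟨by simp, hxa⟩) (hyv ⟨by simp, hya⟩) hyx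

lemma IsCrossEdge.isLocal_of_pairwise (hJ : J.IsTree) (hcross : IsCrossEdge S a b α β)
    (hX : X ⊆ VM S ∪ {a, b}) (hbX : b ∉ X)
    (hpairs : ∀ x ∈ X, ∀ y ∈ X, IsLocal S a b α β {x, y}) : IsLocal S a b α β X := by
  by_cases haX : a ∈ X
  · exact Or.inr (Or.inr (Or.inl ⟨haX, hbX, hcross.exists_sdiff_subset_MV hJ haX hbX hpairs⟩))
  have hXM : X ⊆ VM S := fun x hx =>
    (hX hx).resolve_right (by rintro (rfl | rfl) <;> contradiction)
  refine (S.isMLocal_of_pairwise hJ hXM fun x hx y hy => ?_).isLocal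
  exact StripSystem.isMLocal_of_isLocal (by rintro (rfl | rfl) <;> contradiction)
    (by rintro (rfl | rfl) <;> contradiction) (hpairs x hx y hy)

end CrossEdge

theorem statement_5_general {V W : Type*} (G : SimpleGraph V)
    (J : SimpleGraph W) (hJ : J.IsTree) (S : StripSystem G J)
    (a b : V) (α β : Set W) (hcross : IsCrossEdge S a b α β)
    (X : Set V) (hXsub : X ⊆ VM S ∪ {a, b})
    (hXnl : ¬ IsLocal S a b α β X) (hab : ¬ ({a, b} : Set V) ⊆ X) :
    ∃ x ∈ X, ∃ y ∈ X, ¬ IsLocal S a b α β {x, y} := by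
  by_contra! hpairs
  rcases not_and_or.mp (fun h => hab (Set.pair_subset h.1 h.2)) with haX | hbX
  · refine hXnl (isLocal_swap.mpr (hcross.symm.isLocal_of_pairwise hJ ?_ haX
      fun x hx y hy => isLocal_swap.mp (hpairs x hx y hy)))
    rwa [Set.pair_comm]
  · exact hXnl (hcross.isLocal_of_pairwise hJ hXsub hbX hpairs)

theorem statement_5 {V W : Type*} [Fintype V] [Fintype W] (G : SimpleGraph V)
    (J : SimpleGraph W) (hJ : J.IsTree) (S : StripSystem G J)
    (a b : V) (α β : Set W) (hcross : IsCrossEdge S a b α β)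
    (X : Set V) (hXsub : X ⊆ VM S ∪ {a, b})
    (hXnl : ¬ IsLocal S a b α β X) (hab : ¬ ({a, b} : Set V) ⊆ X) :
    ∃ x ∈ X, ∃ y ∈ X, ¬ IsLocal S a b α β {x, y} :=
  statement_5_general G J hJ S a b α β hcross X hXsub hXnl hab

end EHF
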